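/- Let P = ½P̃ + ½I be an exactly half-lazy, reversible transition kernel on a Polish space X with atomless stationary probability measure π, where each P̃(x,·) has a density with respect to π. Then for all ε ∈ (0,1) and δ ∈ (0,ε), τ_{2,δ}(ε; P) ≤ max( 2·sup_{x∈X} τ₂(ε − δ; δ_x P̃, P) , 2·log(1/δ)/log 2 + 1 ). -/

import Mathlib

open MeasureTheory ProbabilityTheory ENNReal Filter

namespace SpectralProfile

variable {X : Type*} [MeasurableSpace X]

/-- The `k`-step transition kernel `P^k`. -/
noncomputable def kpow (P : Kernel X X) : ℕ → Kernel X X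
  | 0 => Kernel.id
  | (n + 1) => P ∘ₖ (kpow P n)

/-- The distribution `μ P^k` after `k` steps started from `μ`. -/
noncomputable def stepDist (μ : Measure X) (P : Kernel X X) (k : ℕ) : Measure X :=
  μ.bind (kpow P k)

/-- `π` is a stationary distribution for `P`. -/
def IsStationary (π : Measure X) (P : Kernel X X) : Prop :=
  π.bind P = π

/-- `P` is reversible with respect to `π`. -/
def IsReversible (π : Measure X) (P : Kernel X X) : Prop :=
  ∀ A B : Set X, MeasurableSet A → MeasurableSet B →
    ∫⁻ x in A, P x B ∂π = ∫⁻ x in B, P x A ∂π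

/-- `P` is irreducible (with respect to `π`): every set of positive stationary measure
is eventually reachable from every point. -/
def IsIrreducible (π : Measure X) (P : Kernel X X) : Prop :=
  ∀ x : X, ∀ A : Set X, MeasurableSet A → 0 < π A → ∃ n : ℕ, 0 < kpow P n x A

/-- `P` is the exactly half-lazy version of `Pt`:  `P = ½ Pt + ½ I`. -/
def IsHalfLazy (P Pt : Kernel X X) : Prop :=
  ∀ (x : X) (A : Set X), MeasurableSet A →
    P x A = 2⁻¹ * Pt x A + 2⁻¹ * Measure.dirac x A

/-- Each distribution `Pt x` has a density with respect to `π`. -/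
def HasDensities (Pt : Kernel X X) (π : Measure X) : Prop :=
  ∀ x : X, Pt x ≪ π

/-- `μ` is a `β`-warm start with respect to `π`. -/
def IsWarmStart (μ π : Measure X) (β : ℝ) : Prop :=
  ∀ A : Set X, MeasurableSet A → μ A ≤ ENNReal.ofReal β * π A

/-- The `L²` distance `d₂(Q, π)` between a measure `Q` and `π`. -/
noncomputable def L2dist (Q π : Measure X) : ℝ :=
  Real.sqrt (∫ x, ((Q.rnDeriv π x).toReal - 1) ^ 2 ∂π)

/-- The `L²` mixing time `τ₂(ε; μ, P)` from initial distribution `μ`. -/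
noncomputable def mixTime (π : Measure X) (P : Kernel X X) (μ : Measure X) (ε : ℝ) : ℕ :=
  sInf {k : ℕ | L2dist (stepDist μ P k) π ≤ ε}

/-- `⌈k/2⌉` for a natural number `k`. -/
def ceilHalf (k : ℕ) : ℕ := (k + 1) / 2

/-- The quantity `d_{2,δ}(x, P, k)`, valued in `ℝ≥0∞`. -/
noncomputable def d2delta (π : Measure X) (P Pt : Kernel X X) (δ : ℝ) (x : X) (k : ℕ) :
    ℝ≥0∞ :=
  if kpow P (ceilHalf k) x {x} ≤ ENNReal.ofReal δ then
    ENNReal.ofReal (L2dist (stepDist ((Measure.dirac x).bind Pt) P (ceilHalf k)) π + δ)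
  else ⊤

/-- The `δ`-approximate `L²` mixing time `τ_{2,δ}(ε; P)` from a single starting point. -/
noncomputable def mixTimeApprox (π : Measure X) (P Pt : Kernel X X) (δ ε : ℝ) : ℕ :=
  sInf {k : ℕ | (⨆ x : X, d2delta π P Pt δ x k) ≤ ENNReal.ofReal ε}

/-- The Dirichlet form `E(f, f)` of the kernel `P` on `L²(π)`. -/
noncomputable def dirichletForm (π : Measure X) (P : Kernel X X) (f : X → ℝ) : ℝ :=
  (1 / 2) * ∫ x, (∫ y, (f x - f y) ^ 2 ∂(P x)) ∂π

/-- The spectral gap `γ(A)` of `P` for the set `A`. -/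
noncomputable def specGap (π : Measure X) (P : Kernel X X) (A : Set X) : ℝ :=
  sInf {r : ℝ | ∃ f : X → ℝ, MemLp f 2 π ∧ Function.support f ⊆ A ∧ (∀ x, 0 ≤ f x) ∧
    (¬ ∃ c : ℝ, f =ᵐ[π] fun _ => c) ∧ r = dirichletForm π P f / variance f π}

/-- The spectral profile `Γ(v)` of `P`. -/
noncomputable def specProfile (π : Measure X) (P : Kernel X X) (v : ℝ) : ℝ :=
  sInf {r : ℝ | ∃ A : Set X, MeasurableSet A ∧ 0 < π A ∧ π A ≤ ENNReal.ofReal v ∧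
    r = specGap π P A}

/-- The normalized restriction `π|_S` of `π` to `S`. -/
noncomputable def restrictMeasure (π : Measure X) (S : Set X) : Measure X :=
  (π S)⁻¹ • π.restrict S

/-- The eigenfunction expansion assumption (Assumption 2) for the restricted sub-stochastic
kernel `Pt_S` on `L²(π|_S)`: there is an orthonormal basis of eigenfunctions `f i` with
eigenvalues `ev i` decreasing to `0`, `f 0 ≡ 1`, `0 ≤ ev i < 1`, together with the
resulting spectral expansion of the densities of the iterates of `Pt_S`. -/
structure EigenExpansion (π : Measure X) (Pt : Kernel X X) (S : Set X)
    (hS : MeasurableSet S) where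
  f : ℕ → X → ℝ
  ev : ℕ → ℝ
  f_zero : ∀ x, f 0 x = 1
  orthonormal : ∀ i j : ℕ,
    ∫ x, f i x * f j x ∂(restrictMeasure π S) = if i = j then 1 else 0
  ev_nonneg : ∀ i, 0 ≤ ev i
  ev_lt_one : ∀ i, ev i < 1
  ev_anti : Antitone ev
  ev_tendsto : Tendsto ev atTop (nhds 0)
  eigen : ∀ (i : ℕ) (x : X),
    ∫ y, (((Measure.dirac x).bind (Pt.restrict hS)).rnDeriv (restrictMeasure π S) y).toReal
      * f i y ∂(restrictMeasure π S) = ev i * f i x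
  summable : ∀ (ℓ : ℕ), 1 ≤ ℓ → ∀ x y : X,
    Summable fun i : ℕ => |ev i ^ ℓ * f i x * f i y|
  expansion : ∀ (ℓ : ℕ), 1 ≤ ℓ → ∀ x y : X,
    (((Measure.dirac x).bind (kpow (Pt.restrict hS) ℓ)).rnDeriv
        (restrictMeasure π S) y).toReal = ∑' i : ℕ, ev i ^ ℓ * f i x * f i y

end SpectralProfile

/-!
Each `P̃(x, ·)` has a density with respect to the atomless `π`, so `P^m(x, {x}) = 2^{-m}`: only
the lazy half of each step stays at `x`. This is at most `δ` once `m ≥ log(1/δ) / log 2`.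
On the other hand `d₂(μP^m, π)` is nonincreasing in `m`: by reversibility the density of `νP`
is `P` applied to the density of `ν`, and Jensen's inequality for each `P(x, ·)` followed by
stationarity bounds its `χ²`-divergence by that of `ν`. So with
`N = sup_x τ₂(ε - δ; δ_x P̃, P)` and `m₀ = ⌈log(1/δ) / log 2⌉`, both conditions in `d_{2,δ}` hold
at the odd time `k = 2 max(N, m₀) - 1`, for which `⌈k/2⌉ = max(N, m₀)`.
-/

open scoped NNReal

namespace SpectralProfile

variable {X : Type*} [MeasurableSpace X] {π : Measure X} {P Pt : Kernel X X}

instance isMarkovKernel_kpow [IsMarkovKernel P] (k : ℕ) : IsMarkovKernel (kpow P k) := by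
  induction k with
  | zero => rw [kpow]; infer_instance
  | succ n ih => rw [kpow]; infer_instance

lemma kpow_succ_apply (n : ℕ) (x : X) : kpow P (n + 1) x = (kpow P n x).bind P := by
  rw [kpow, Kernel.comp_apply]

lemma stepDist_zero (μ : Measure X) : stepDist μ P 0 = μ := by
  rw [stepDist, kpow, Measure.id_comp]

instance isFiniteMeasure_stepDist [IsMarkovKernel P] (μ : Measure X) [IsFiniteMeasure μ]
    (k : ℕ) : IsFiniteMeasure (stepDist μ P k) := by
  rw [stepDist]
  infer_instance

lemma stepDist_succ (μ : Measure X) (k : ℕ) :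
    stepDist μ P (k + 1) = (stepDist μ P k).bind P := by
  rw [stepDist, stepDist, kpow, Measure.comp_assoc]

lemma IsReversible.map_swap_compProd [IsFiniteMeasure π] [IsMarkovKernel P]
    (hrev : IsReversible π P) : (π ⊗ₘ P).map Prod.swap = π ⊗ₘ P :=
  Measure.ext_prod fun hs ht => by
    rw [Measure.map_apply measurable_swap (hs.prod ht), Set.preimage_swap_prod,
      Measure.compProd_apply_prod ht hs, Measure.compProd_apply_prod hs ht, hrev _ _ ht hs]

lemma IsReversible.lintegral_lintegral_swap [IsFiniteMeasure π] [IsMarkovKernel P]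
    (hrev : IsReversible π P) {f : X → X → ℝ≥0∞} (hf : Measurable (Function.uncurry f)) :
    ∫⁻ x, ∫⁻ y, f y x ∂P x ∂π = ∫⁻ x, ∫⁻ y, f x y ∂P x ∂π := by
  calc ∫⁻ x, ∫⁻ y, f y x ∂P x ∂π = ∫⁻ p, Function.uncurry f p.swap ∂(π ⊗ₘ P) :=
        (Measure.lintegral_compProd (hf.comp measurable_swap)).symm
    _ = ∫⁻ p, Function.uncurry f p ∂((π ⊗ₘ P).map Prod.swap) :=
        (lintegral_map hf measurable_swap).symm
    _ = _ := by rw [hrev.map_swap_compProd, Measure.lintegral_compProd hf]; rfl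

lemma IsReversible.bind_eq_withDensity [IsFiniteMeasure π] [IsMarkovKernel P]
    (hrev : IsReversible π P) {ν : Measure X} [ν.HaveLebesgueDecomposition π] (hν : ν ≪ π) :
    ν.bind P = π.withDensity fun x => ∫⁻ y, ν.rnDeriv π y ∂P x := by
  have hg := Measure.measurable_rnDeriv ν π
  ext A hA
  rw [Measure.bind_apply hA P.aemeasurable, withDensity_apply _ hA, ← lintegral_indicator hA]
  calc ∫⁻ x, P x A ∂ν = ∫⁻ x, ν.rnDeriv π x * P x A ∂π := by
        conv_lhs => rw [← Measure.withDensity_rnDeriv_eq ν π hν]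
        exact lintegral_withDensity_eq_lintegral_mul π hg (P.measurable_coe hA)
    _ = ∫⁻ x, ∫⁻ y, ν.rnDeriv π x * A.indicator 1 y ∂P x ∂π := by
        simp_rw [lintegral_const_mul _ (measurable_one.indicator hA), lintegral_indicator_one hA]
    _ = ∫⁻ x, ∫⁻ y, ν.rnDeriv π y * A.indicator 1 x ∂P x ∂π :=
        (hrev.lintegral_lintegral_swap (f := fun x y => ν.rnDeriv π x * A.indicator 1 y)
          ((hg.comp measurable_fst).mul ((measurable_one.indicator hA).comp measurable_snd))).symm
    _ = ∫⁻ x, A.indicator (fun x => ∫⁻ y, ν.rnDeriv π y ∂P x) x ∂π := by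
        congr 1 with x
        by_cases hx : x ∈ A <;> simp [hx]

/-- The `χ²`-divergence of `ν` from `π`. `L2dist ν π` is the square root of its `toReal`, so it
takes the junk value `0` when the divergence is infinite. -/
noncomputable def chiSqDiv (π ν : Measure X) : ℝ≥0∞ :=
  ∫⁻ x, ENNReal.ofReal (((ν.rnDeriv π x).toReal - 1) ^ 2) ∂π

lemma ofReal_sq_toReal_lintegral_sub_one_le (ν : Measure X) [IsProbabilityMeasure ν]
    {g : X → ℝ≥0∞} (hg : Measurable g) (hg_fin : ∀ᵐ y ∂ν, g y < ∞) :
    ENNReal.ofReal (((∫⁻ y, g y ∂ν).toReal - 1) ^ 2)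
      ≤ ∫⁻ y, ENNReal.ofReal (((g y).toReal - 1) ^ 2) ∂ν := by
  set h : X → ℝ := fun y => (g y).toReal - 1
  have hh : Measurable h := hg.ennreal_toReal.sub_const 1
  by_cases hI : ∫⁻ y, ENNReal.ofReal (h y ^ 2) ∂ν = ∞
  · exact hI ▸ le_top
  have hsq : Integrable (fun y => h y ^ 2) ν :=
    ⟨(hh.pow_const 2).aestronglyMeasurable,
      (hasFiniteIntegral_iff_ofReal (.of_forall fun y => sq_nonneg _)).2 (lt_top_iff_ne_top.2 hI)⟩
  have hL2 : MemLp h 2 ν := (memLp_two_iff_integrable_sq hh.aestronglyMeasurable).2 hsq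
  have hg_int : Integrable (fun y => (g y).toReal) ν :=
    ((hL2.integrable one_le_two).add (integrable_const 1)).congr (.of_forall fun y => by simp [h])
  have hmean : (∫⁻ y, g y ∂ν).toReal - 1 = ∫ y, h y ∂ν := by
    rw [integral_sub hg_int (integrable_const 1), integral_toReal hg.aemeasurable hg_fin]
    simp
  have hjensen : (∫ y, h y ∂ν) ^ 2 ≤ ∫ y, h y ^ 2 ∂ν := by
    have := variance_eq_sub hL2
    simp only [Pi.pow_apply] at this
    linarith [variance_nonneg h ν]
  rw [hmean, ← ofReal_integral_eq_lintegral_ofReal hsq (.of_forall fun y => sq_nonneg _)]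
  exact ENNReal.ofReal_le_ofReal hjensen

lemma L2dist_eq_sqrt_toReal_chiSqDiv (ν : Measure X) :
    L2dist ν π = √(chiSqDiv π ν).toReal := by
  rw [L2dist, chiSqDiv, integral_eq_lintegral_of_nonneg_ae (.of_forall fun x => sq_nonneg _)
    (((Measure.measurable_rnDeriv ν π).ennreal_toReal.sub_const 1).pow_const
      2).aestronglyMeasurable]

lemma chiSqDiv_bind_le [IsProbabilityMeasure π] [IsMarkovKernel P] (hstat : IsStationary π P)
    (hrev : IsReversible π P) {ν : Measure X} [IsFiniteMeasure ν] (hν : ν ≪ π) :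
    chiSqDiv π (ν.bind P) ≤ chiSqDiv π ν := by
  set g := ν.rnDeriv π
  have hg : Measurable g := Measure.measurable_rnDeriv ν π
  have hF : Measurable fun y => ENNReal.ofReal (((g y).toReal - 1) ^ 2) :=
    ((hg.ennreal_toReal.sub_const 1).pow_const 2).ennreal_ofReal
  have hdens : (ν.bind P).rnDeriv π =ᵐ[π] fun x => ∫⁻ y, g y ∂P x := by
    rw [hrev.bind_eq_withDensity hν]
    exact Measure.rnDeriv_withDensity π (hg.lintegral_kernel (κ := P))
  have hg_fin : ∀ᵐ x ∂π, ∀ᵐ y ∂P x, g y < ∞ :=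
    Measure.ae_ae_of_ae_bind P.aemeasurable (hstat.symm ▸ Measure.rnDeriv_lt_top ν π)
  calc chiSqDiv π (ν.bind P)
      = ∫⁻ x, ENNReal.ofReal (((∫⁻ y, g y ∂P x).toReal - 1) ^ 2) ∂π :=
        lintegral_congr_ae (hdens.mono fun x hx => by simp only [hx])
    _ ≤ ∫⁻ x, ∫⁻ y, ENNReal.ofReal (((g y).toReal - 1) ^ 2) ∂P x ∂π :=
        lintegral_mono_ae (hg_fin.mono fun x hx =>
          ofReal_sq_toReal_lintegral_sub_one_le (P x) hg hx)
    _ = chiSqDiv π ν := by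
        rw [← Measure.lintegral_bind P.aemeasurable hF.aemeasurable, hstat, chiSqDiv]

lemma IsHalfLazy.smul_le_bind (hlazy : IsHalfLazy P Pt) (ν : Measure X) :
    (2⁻¹ : ℝ≥0) • ν ≤ ν.bind P := by
  refine Measure.le_iff.2 fun A hA => ?_
  calc ((2⁻¹ : ℝ≥0) • ν) A = ∫⁻ x, 2⁻¹ * A.indicator 1 x ∂ν := by
        rw [lintegral_const_mul _ (measurable_one.indicator hA), lintegral_indicator_one hA]
        simp
    _ ≤ ∫⁻ x, P x A ∂ν := lintegral_mono fun x => by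
        rw [hlazy x A hA, Measure.dirac_apply' x hA]
        exact le_add_self
    _ = (ν.bind P) A := (Measure.bind_apply hA P.aemeasurable).symm

lemma const_mul_rnDeriv_le_of_smul_le [SigmaFinite π] {ν ν' : Measure X} [IsFiniteMeasure ν]
    [IsFiniteMeasure ν'] {c : ℝ≥0} (h : c • ν ≤ ν') :
    ∀ᵐ x ∂π, c * ν.rnDeriv π x ≤ ν'.rnDeriv π x := by
  have hsplit := Measure.rnDeriv_add (ν' - c • ν) (c • ν) π
  rw [Measure.sub_add_cancel_of_le h] at hsplit
  filter_upwards [hsplit, Measure.rnDeriv_smul_left ν π c] with x hx hxc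
  rw [hx, Pi.add_apply, hxc]
  exact le_add_self

lemma sq_sub_one_le_of_le_two_mul {a b : ℝ} (ha : 0 ≤ a) (hab : a ≤ 2 * b) :
    (a - 1) ^ 2 ≤ 8 * (b - 1) ^ 2 + 2 := by
  rcases le_or_gt a 1 with h1 | h1
  · nlinarith [sq_nonneg (b - 1)]
  · nlinarith [sq_nonneg (2 * (b - 1) - 1)]

lemma chiSqDiv_le_of_smul_le [IsProbabilityMeasure π] {ν ν' : Measure X} [IsFiniteMeasure ν]
    [IsFiniteMeasure ν'] (h : (2⁻¹ : ℝ≥0) • ν ≤ ν') :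
    chiSqDiv π ν ≤ 8 * chiSqDiv π ν' + 2 := by
  have hpt : ∀ᵐ x ∂π, ENNReal.ofReal (((ν.rnDeriv π x).toReal - 1) ^ 2)
      ≤ 8 * ENNReal.ofReal (((ν'.rnDeriv π x).toReal - 1) ^ 2) + 2 := by
    filter_upwards [const_mul_rnDeriv_le_of_smul_le h, Measure.rnDeriv_lt_top ν' π]
      with x hx hfin
    have hle := ENNReal.toReal_mono hfin.ne hx
    rw [ENNReal.toReal_mul] at hle
    rw [← ENNReal.ofReal_ofNat 8, ← ENNReal.ofReal_mul (by norm_num), ← ENNReal.ofReal_ofNat 2,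
      ← ENNReal.ofReal_add (by positivity) (by norm_num)]
    refine ENNReal.ofReal_le_ofReal (sq_sub_one_le_of_le_two_mul ENNReal.toReal_nonneg ?_)
    norm_num at hle
    linarith
  calc chiSqDiv π ν ≤ ∫⁻ x, 8 * ENNReal.ofReal (((ν'.rnDeriv π x).toReal - 1) ^ 2) + 2 ∂π :=
        lintegral_mono_ae hpt
    _ = 8 * chiSqDiv π ν' + 2 := by
        rw [lintegral_add_right _ measurable_const, lintegral_const_mul _ (by fun_prop)]
        simp [chiSqDiv]

lemma stepDist_absolutelyContinuous (hstat : IsStationary π P) {μ : Measure X} (hμ : μ ≪ π) :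
    ∀ k, stepDist μ P k ≪ π
  | 0 => by rwa [stepDist_zero]
  | k + 1 => by
    rw [stepDist_succ, ← hstat]
    exact (stepDist_absolutelyContinuous hstat hμ k).comp_right P

lemma L2dist_bind_le [IsProbabilityMeasure π] [IsMarkovKernel P] (hstat : IsStationary π P)
    (hrev : IsReversible π P) (hlazy : IsHalfLazy P Pt) {ν : Measure X} [IsFiniteMeasure ν]
    (hν : ν ≪ π) : L2dist (ν.bind P) π ≤ L2dist ν π := by
  rw [L2dist_eq_sqrt_toReal_chiSqDiv, L2dist_eq_sqrt_toReal_chiSqDiv]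
  by_cases hν_top : chiSqDiv π ν = ∞
  · -- laziness keeps the divergence infinite, so both distances take the junk value `0`
    have hbind_top : chiSqDiv π (ν.bind P) = ∞ := by
      by_contra hfin
      have := chiSqDiv_le_of_smul_le (π := π) (hlazy.smul_le_bind ν)
      rw [hν_top, top_le_iff] at this
      exact ENNReal.add_ne_top.2 ⟨ENNReal.mul_ne_top (by norm_num) hfin, by norm_num⟩ this
    simp [hbind_top, hν_top]
  · exact Real.sqrt_le_sqrt (ENNReal.toReal_mono hν_top (chiSqDiv_bind_le hstat hrev hν))

lemma L2dist_stepDist_antitone [IsProbabilityMeasure π] [IsMarkovKernel P]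
    (hstat : IsStationary π P) (hrev : IsReversible π P) (hlazy : IsHalfLazy P Pt)
    {μ : Measure X} [IsFiniteMeasure μ] (hμ : μ ≪ π) :
    Antitone fun k => L2dist (stepDist μ P k) π :=
  antitone_nat_of_succ_le fun k => by
    rw [stepDist_succ]
    exact L2dist_bind_le hstat hrev hlazy (stepDist_absolutelyContinuous hstat hμ k)

lemma IsHalfLazy.bind_apply_singleton [MeasurableSingletonClass X] (hlazy : IsHalfLazy P Pt)
    (hdens : HasDensities Pt π) {x : X} (hx : π {x} = 0) (ν : Measure X) :
    (ν.bind P) {x} = 2⁻¹ * ν {x} := by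
  have hP : ∀ y, P y {x} = 2⁻¹ * ({x} : Set X).indicator 1 y := fun y => by
    rw [hlazy y {x} (measurableSet_singleton x), hdens y hx, Measure.dirac_apply, mul_zero,
      zero_add]
  simp_rw [Measure.bind_apply (measurableSet_singleton x) P.aemeasurable, hP]
  rw [lintegral_const_mul _ (measurable_one.indicator (measurableSet_singleton x)),
    lintegral_indicator_one (measurableSet_singleton x)]

lemma IsHalfLazy.kpow_apply_singleton_self [MeasurableSingletonClass X]
    (hlazy : IsHalfLazy P Pt) (hdens : HasDensities Pt π) {x : X} (hx : π {x} = 0) (n : ℕ) :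
    kpow P n x {x} = 2⁻¹ ^ n := by
  induction n with
  | zero => simp [kpow, Kernel.id_apply]
  | succ n ih => rw [kpow_succ_apply, hlazy.bind_apply_singleton hdens hx, ih, pow_succ']

lemma two_inv_pow_le_ofReal {δ : ℝ} (hδ : 0 < δ) {n : ℕ}
    (hn : ⌈Real.log (1 / δ) / Real.log 2⌉₊ ≤ n) : (2⁻¹ : ℝ≥0∞) ^ n ≤ ENNReal.ofReal δ := by
  have hlog : Real.log (1 / δ) ≤ Real.log (2 ^ n) := by
    rw [Real.log_pow]
    exact (div_le_iff₀ (Real.log_pos one_lt_two)).1 ((Nat.le_ceil _).trans (by exact_mod_cast hn))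
  have hinv : (2 ^ n : ℝ)⁻¹ ≤ δ :=
    inv_le_of_inv_le₀ hδ (by
      simpa using (Real.log_le_log_iff (by positivity) (by positivity)).1 hlog)
  calc (2⁻¹ : ℝ≥0∞) ^ n = ENNReal.ofReal (2 ^ n : ℝ)⁻¹ := by
        rw [ENNReal.ofReal_inv_of_pos (by positivity), ENNReal.ofReal_pow zero_le_two,
          ENNReal.inv_pow]
        simp
    _ ≤ ENNReal.ofReal δ := ENNReal.ofReal_le_ofReal hinv

lemma natCast_two_mul_ceil_sub_one_le (a : ℝ) :
    ((2 * ⌈a⌉₊ - 1 : ℕ) : ℝ≥0∞) ≤ ENNReal.ofReal (2 * a + 1) := by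
  rcases le_or_gt a 0 with ha | ha
  · simp [Nat.ceil_eq_zero.2 ha]
  rw [← ENNReal.ofReal_natCast]
  refine ENNReal.ofReal_le_ofReal ?_
  have := Nat.ceil_lt_add_one ha.le
  have := Nat.one_le_ceil_iff.2 ha
  push_cast [Nat.cast_sub (by omega : 1 ≤ 2 * ⌈a⌉₊)]
  linarith

lemma ceilHalf_two_mul_sub_one (n : ℕ) : ceilHalf (2 * n - 1) = n := by
  unfold ceilHalf
  omega

lemma exists_forall_le_natCast_le_iSup {ι : Type*} {f : ι → ℕ}
    (hf : ⨆ i, (f i : ℝ≥0∞) ≠ ∞) : ∃ N : ℕ, (∀ i, f i ≤ N) ∧ (N : ℝ≥0∞) ≤ ⨆ i, (f i : ℝ≥0∞) := by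
  refine ⟨⌊(⨆ i, (f i : ℝ≥0∞)).toReal⌋₊, fun i => Nat.le_floor ?_, ?_⟩
  · exact_mod_cast ENNReal.toReal_mono hf (le_iSup (fun i => (f i : ℝ≥0∞)) i)
  · rw [← ENNReal.ofReal_natCast]
    exact (ENNReal.ofReal_le_ofReal (Nat.floor_le ENNReal.toReal_nonneg)).trans_eq
      (ENNReal.ofReal_toReal hf)

/-- If some start never reaches `d₂ ≤ ε - δ`, no time qualifies and `mixTimeApprox` is
`sInf ∅ = 0`. -/
lemma mixTimeApprox_eq_zero_of_forall_lt {δ ε : ℝ} (hε : 0 ≤ ε) {x : X}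
    (hx : ∀ k, ε - δ < L2dist (stepDist ((Measure.dirac x).bind Pt) P k) π) :
    mixTimeApprox π P Pt δ ε = 0 := by
  refine Nat.sInf_eq_zero.2 (.inr (Set.eq_empty_of_forall_notMem fun k hk => ?_))
  have hxk := (le_iSup (fun x => d2delta π P Pt δ x k) x).trans hk
  rw [d2delta] at hxk
  split_ifs at hxk
  · have := hx (ceilHalf k)
    rw [ENNReal.ofReal_le_ofReal_iff hε] at hxk
    linarith
  · exact ENNReal.ofReal_ne_top (top_le_iff.1 hxk)

lemma mixTimeApprox_le_two_mul_sub_one [MeasurableSingletonClass X] (hlazy : IsHalfLazy P Pt)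
    (hdens : HasDensities Pt π) (hatomless : ∀ x : X, π {x} = 0) {δ ε : ℝ} (hδ : 0 < δ)
    {n : ℕ} (hn : ⌈Real.log (1 / δ) / Real.log 2⌉₊ ≤ n)
    (hL2 : ∀ x, L2dist (stepDist ((Measure.dirac x).bind Pt) P n) π ≤ ε - δ) :
    mixTimeApprox π P Pt δ ε ≤ 2 * n - 1 := by
  refine Nat.sInf_le (show (⨆ x, d2delta π P Pt δ x (2 * n - 1)) ≤ _ from iSup_le fun x => ?_)
  rw [d2delta, ceilHalf_two_mul_sub_one, if_pos (by
    rw [hlazy.kpow_apply_singleton_self hdens (hatomless x)]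
    exact two_inv_pow_le_ofReal hδ hn)]
  exact ENNReal.ofReal_le_ofReal (by linarith [hL2 x])

end SpectralProfile

open SpectralProfile MeasureTheory ProbabilityTheory in
theorem stmt11_general {X : Type*} [MeasurableSpace X] [TopologicalSpace X] [PolishSpace X]
    [BorelSpace X] (P Pt : Kernel X X) [IsMarkovKernel P] [IsMarkovKernel Pt]
    (π : Measure X) [IsProbabilityMeasure π]
    (hstat : IsStationary π P) (hrev : IsReversible π P)
    (hlazy : IsHalfLazy P Pt) (hdens : HasDensities Pt π)
    (hatomless : ∀ x : X, π {x} = 0)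
    (ε δ : ℝ) (hδ : δ ∈ Set.Ioo (0 : ℝ) ε) :
    (mixTimeApprox π P Pt δ ε : ℝ≥0∞) ≤
      max (2 * ⨆ x : X, (mixTime π P ((Measure.dirac x).bind Pt) (ε - δ) : ℝ≥0∞))
        (ENNReal.ofReal (2 * Real.log (1 / δ) / Real.log 2 + 1)) := by
  obtain ⟨hδ₀, hδε⟩ := hδ
  set m₀ := ⌈Real.log (1 / δ) / Real.log 2⌉₊
  by_cases hreach : ∀ x, ∃ k, L2dist (stepDist ((Measure.dirac x).bind Pt) P k) π ≤ ε - δ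
  swap
  · push Not at hreach
    obtain ⟨x, hx⟩ := hreach
    simp [mixTimeApprox_eq_zero_of_forall_lt (hδ₀.trans hδε).le hx]
  by_cases hsup : ⨆ x, (mixTime π P ((Measure.dirac x).bind Pt) (ε - δ) : ℝ≥0∞) = ∞
  · simp [hsup]
  obtain ⟨N, hN, hN_le⟩ := exists_forall_le_natCast_le_iSup hsup
  have hL2 : ∀ x, L2dist (stepDist ((Measure.dirac x).bind Pt) P (max N m₀)) π ≤ ε - δ :=
    fun x => (L2dist_stepDist_antitone hstat hrev hlazy
      (by rw [Measure.dirac_bind Pt.measurable]; exact hdens x)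
      ((hN x).trans (le_max_left _ _))).trans (Nat.sInf_mem (hreach x))
  calc (mixTimeApprox π P Pt δ ε : ℝ≥0∞) ≤ ((2 * max N m₀ - 1 : ℕ) : ℝ≥0∞) := by
        exact_mod_cast mixTimeApprox_le_two_mul_sub_one hlazy hdens hatomless hδ₀
          (le_max_right _ _) hL2
    _ ≤ max ((2 * N : ℕ) : ℝ≥0∞) ((2 * m₀ - 1 : ℕ) : ℝ≥0∞) := by
        rw [← Nat.mono_cast.map_max]
        exact Nat.cast_le.2 (by omega)
    _ ≤ _ := max_le_max (by push_cast; exact mul_le_mul_right hN_le 2)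
        ((natCast_two_mul_ceil_sub_one_le _).trans_eq (by rw [mul_div_assoc]))

open SpectralProfile MeasureTheory ProbabilityTheory in
/-- Equation (15): bound of the `δ`-approximate mixing time by the `L²` mixing times
from the starting distributions `δ_x P̃`. -/
theorem stmt11 {X : Type*} [MeasurableSpace X] [TopologicalSpace X] [PolishSpace X]
    [BorelSpace X] (P Pt : Kernel X X) [IsMarkovKernel P] [IsMarkovKernel Pt]
    (π : Measure X) [IsProbabilityMeasure π]
    (hstat : IsStationary π P) (hrev : IsReversible π P)
    (hlazy : IsHalfLazy P Pt) (hdens : HasDensities Pt π)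
    (hatomless : ∀ x : X, π {x} = 0)
    (ε δ : ℝ) (hε : ε ∈ Set.Ioo (0 : ℝ) 1) (hδ : δ ∈ Set.Ioo (0 : ℝ) ε) :
    (mixTimeApprox π P Pt δ ε : ℝ≥0∞) ≤
      max (2 * ⨆ x : X, (mixTime π P ((Measure.dirac x).bind Pt) (ε - δ) : ℝ≥0∞))
        (ENNReal.ofReal (2 * Real.log (1 / δ) / Real.log 2 + 1)) :=
  stmt11_general P Pt π hstat hrev hlazy hdens hatomless ε δ hδ
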